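/- arXiv:2509.02889 — 2 statements merged into one kernel-verified Lean document; each statement's English description precedes it below -/
import Mathlib

section
/- Let K be a field with a locally bounded Hausdorff field topology τ. Then τ has weight at most |K|, i.e., τ has a basis of cardinality at most the cardinality of K. -/
open TopologicalSpace Polynomial

variable {K : Type*}

/-- `τ` is a (Hausdorff) field topology on `K`. -/
def IsFieldTopology [Field K] (τ : TopologicalSpace K) : Prop :=
  @T2Space K τ ∧ @IsTopologicalRing K τ _ ∧
    @ContinuousOn K K τ τ (fun x => x⁻¹) {0}ᶜ

/-- `s` is a bounded subset of `K` with respect to the field topology `τ`. -/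
def IsBddSet [Field K] (τ : TopologicalSpace K) (s : Set K) : Prop :=
  ∀ U ∈ @nhds K τ 0, ∃ l : K, l ≠ 0 ∧ ∀ x ∈ s, l * x ∈ U

/-- `τ` is locally bounded: some nonempty open set is bounded. -/
def IsLocallyBoundedTop [Field K] (τ : TopologicalSpace K) : Prop :=
  ∃ U : Set K, @IsOpen K τ U ∧ U.Nonempty ∧ IsBddSet τ U
/-!
If `X` is a nonempty bounded open set, `W = X - X` is a bounded open neighbourhood of `0`, and
the sets `a + l • W` with `l ≠ 0` form a basis: for an open `U ∋ a`, boundedness of `W` gives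
`l ≠ 0` with `l • W ⊆ U - a`. For infinite `K` there are at most `|K × Kˣ| = |K|` such sets; a finite
Hausdorff field is discrete, with the singletons as a basis.
-/

open scoped Pointwise

theorem exists_isTopologicalBasis_mk_le_of_discrete [TopologicalSpace K] [DiscreteTopology K] :
    ∃ B : Set (Set K), IsTopologicalBasis B ∧ Cardinal.mk B ≤ Cardinal.mk K := by
  refine ⟨_, isTopologicalBasis_singletons K,
    Cardinal.mk_le_of_surjective (f := fun x => ⟨{x}, x, rfl⟩) ?_⟩
  rintro ⟨_, x, rfl⟩
  exact ⟨x, rfl⟩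

section

variable [Field K] [t : TopologicalSpace K]

theorem IsBddSet.sub_self [IsTopologicalAddGroup K] {s : Set K} (hs : IsBddSet t s) :
    IsBddSet t (s - s) := by
  intro U hU
  obtain ⟨V, hV, hVU⟩ := exists_nhds_half_neg hU
  obtain ⟨l, hl, hls⟩ := hs V hV
  refine ⟨l, hl, ?_⟩
  rintro _ ⟨x, hx, y, hy, rfl⟩
  simpa only [mul_sub] using hVU _ (hls x hx) _ (hls y hy)

theorem isTopologicalBasis_vadd_smul_of_isBddSet [ContinuousAdd K] [ContinuousMul K]
    {W : Set K} (hW : IsOpen W) (hW0 : 0 ∈ W) (hWb : IsBddSet t W) :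
    IsTopologicalBasis (Set.range fun p : K × Kˣ => p.1 +ᵥ p.2 • W) := by
  refine isTopologicalBasis_of_isOpen_of_nhds ?_ fun a U haU hU => ?_
  · rintro _ ⟨⟨a, l⟩, rfl⟩
    exact (hW.smul l).vadd a
  obtain ⟨l, hl, hlW⟩ := hWb ((a + ·) ⁻¹' U)
    ((continuous_const_add a).continuousAt.preimage_mem_nhds (by simpa using hU.mem_nhds haU))
  refine ⟨a +ᵥ Units.mk0 l hl • W, ⟨(a, Units.mk0 l hl), rfl⟩,
    ⟨0, ⟨0, hW0, by simp⟩, by simp⟩, ?_⟩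
  rintro _ ⟨_, ⟨w, hw, rfl⟩, rfl⟩
  exact hlW w hw

end

theorem stmt11 [Field K] (τ : TopologicalSpace K) (hτ : IsFieldTopology τ)
    (hlb : IsLocallyBoundedTop τ) :
    ∃ B : Set (Set K), @TopologicalSpace.IsTopologicalBasis K τ B ∧
      Cardinal.mk B ≤ Cardinal.mk K := by
  obtain ⟨_, _, -⟩ := hτ
  cases finite_or_infinite K
  · have : DiscreteTopology K := Finite.instDiscreteTopology
    exact exists_isTopologicalBasis_mk_le_of_discrete
  obtain ⟨X, hXo, hXne, hXb⟩ := hlb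
  refine ⟨_, isTopologicalBasis_vadd_smul_of_isBddSet hXo.sub_right hXne.zero_mem_sub
    hXb.sub_self, Cardinal.mk_range_le.trans ?_⟩
  calc Cardinal.mk (K × Kˣ) ≤ Cardinal.mk (K × K) :=
        Cardinal.mk_le_of_injective (Function.injective_id.prodMap Units.val_injective)
    _ = Cardinal.mk K := by
        rw [Cardinal.mk_prod, Cardinal.lift_id, Cardinal.mul_eq_self (Cardinal.aleph0_le_mk K)]
end

section
/- Let K be a field with a gt-henselian field topology τ, let d : K → K be a derivation whose constant subfield Cons(d) is τ-dense in K and d ≠ 0. Then the topology τ_d (induced by a ↦ (a, d(a))) is a gt-henselian topology strictly refining τ. -/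
open TopologicalSpace Polynomial

variable {K : Type*}

/-- The topology on `K` induced by the embedding `a ↦ (a, (d a)_{d ∈ I})` into `K × K^I`,
where `K × K^I` carries the product topology induced by `τ`. -/
def derTop [Field K] (τ : TopologicalSpace K) (I : Set (Derivation ℤ K K)) :
    TopologicalSpace K :=
  @TopologicalSpace.induced K (K × (I → K)) (fun a => (a, fun d => d.1 a))
    (@instTopologicalSpaceProd K (I → K) τ (@Pi.topologicalSpace I (fun _ => K) fun _ => τ))

/-- `τ` is a gt-henselian topology on `K`. -/
def IsGtHenselian [Field K] (τ : TopologicalSpace K) : Prop :=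
  IsFieldTopology τ ∧ τ ≠ ⊥ ∧
    ∀ U ∈ @nhds K τ (-1), ∀ d : ℕ, ∃ V ∈ @nhds K τ 0,
      ∀ a : Fin (d + 1) → K, (∀ i, a i ∈ V) →
        ∃ β ∈ U,
          (X ^ (d + 2) + X ^ (d + 1) + ∑ i : Fin (d + 1), C (a i) * X ^ (i : ℕ)).eval β = 0 ∧
          (Polynomial.derivative
            (X ^ (d + 2) + X ^ (d + 1) + ∑ i : Fin (d + 1), C (a i) * X ^ (i : ℕ))).eval β ≠ 0

/-!
Write `τ_D` for `derTop τ {D}`. It is the topology induced by the ring homomorphism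
`a ↦ a + D(a) ε` into the dual numbers over `(K, τ)`, hence a ring topology, and inversion is
continuous because `D(a⁻¹) = -a⁻² D(a)`. If `τ_D` were `τ`, then `D` would be `τ`-continuous and
vanish on a dense set; and every `τ_D`-neighbourhood of `0` contains nonzero constants of `D`, so
`τ_D` is not discrete. Finally, differentiating `P(β) = 0` for
`P = X^(n+2) + X^(n+1) + ∑ aᵢ Xⁱ` gives `D(β) = -(∑ βⁱ D(aᵢ)) / P'(β)`, which is `τ`-small when
the `aᵢ` and `D(aᵢ)` are `τ`-small and `β` is near `-1`; so the simple roots supplied by `τ`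
are also `τ_D`-close to `-1`.
-/

open Topology Filter

namespace Derivation

variable {R : Type*} [CommRing R]

def toTrivSqZeroExt (D : Derivation ℤ R R) : R →+* TrivSqZeroExt R R where
  toFun a := (a, D a)
  map_one' := by ext <;> simp
  map_mul' a b := by
    ext
    · rfl
    · change D (a * b) = a • D b + MulOpposite.op b • D a
      simp [D.leibniz, smul_eq_mul, mul_comm]
  map_zero' := by ext <;> simp
  map_add' a b := by ext <;> simp <;> rfl

end Derivation

theorem isTopologicalRing_induced {R S : Type*} [Ring R] [Ring S] [TopologicalSpace S]
    [IsTopologicalRing S] (f : R →+* S) :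
    @IsTopologicalRing R (induced f ‹_›) _ := by
  let _ := induced f ‹TopologicalSpace S›
  have hf : IsInducing f := ⟨rfl⟩
  have := hf.topologicalAddGroup f
  have := hf.continuousMul f
  exact {}

theorem isFieldTopology_iff [Field K] [τ : TopologicalSpace K] :
    IsFieldTopology τ ↔ T2Space K ∧ IsTopologicalRing K ∧ ContinuousInv₀ K := by
  refine and_congr_right fun _ => and_congr_right fun _ => ⟨fun h => ⟨fun x hx => ?_⟩,
    fun _ => continuousOn_inv₀⟩
  exact h.continuousAt (isOpen_compl_singleton.mem_nhds hx)

section DerTop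

variable [Field K] [τ : TopologicalSpace K] (D : Derivation ℤ K K)

theorem derTop_singleton : derTop τ {D} = τ ⊓ induced D τ := by
  rw [derTop, instTopologicalSpaceProd, induced_inf, induced_compose, induced_compose,
    Pi.topologicalSpace, induced_iInf, iInf_unique, induced_compose]
  exact congrArg₂ _ induced_id rfl

theorem derTop_singleton_le : derTop τ {D} ≤ τ :=
  (derTop_singleton D).trans_le inf_le_left

theorem derTop_singleton_eq_induced_toTrivSqZeroExt :
    derTop τ {D} = induced D.toTrivSqZeroExt inferInstance := by
  rw [derTop_singleton, TrivSqZeroExt.instTopologicalSpace, induced_inf, induced_compose,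
    induced_compose]
  exact congrArg₂ _ induced_id.symm rfl

theorem nhds_derTop_singleton (x : K) :
    @nhds K (derTop τ {D}) x = 𝓝 x ⊓ comap D (𝓝 (D x)) := by
  rw [derTop_singleton, nhds_inf, nhds_induced]

theorem tendsto_nhds_derTop_singleton_iff {α : Type*} {f : α → K} {l : Filter α} {y : K} :
    Tendsto f l (@nhds K (derTop τ {D}) y) ↔
      Tendsto f l (𝓝 y) ∧ Tendsto (D ∘ f) l (𝓝 (D y)) := by
  rw [nhds_derTop_singleton, tendsto_inf, tendsto_comap_iff]

theorem nhdsWithin_le_nhds_derTop_singleton {s : Set K} {x : K} (hs : ∀ y ∈ s, D y = D x) :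
    𝓝[s] x ≤ @nhds K (derTop τ {D}) x := by
  rw [nhds_derTop_singleton]
  refine le_inf inf_le_left (inf_le_right.trans (tendsto_iff_comap.1 ?_))
  exact tendsto_const_nhds.congr' (eventually_principal.2 fun y hy => (hs y hy).symm)

theorem isTopologicalRing_derTop_singleton [IsTopologicalRing K] :
    @IsTopologicalRing K (derTop τ {D}) _ := by
  rw [derTop_singleton_eq_induced_toTrivSqZeroExt]
  exact isTopologicalRing_induced _

theorem continuousInv₀_derTop_singleton [IsTopologicalRing K] [ContinuousInv₀ K] :
    @ContinuousInv₀ K _ _ (derTop τ {D}) := by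
  refine @ContinuousInv₀.mk K _ _ (derTop τ {D}) fun x hx => ?_
  change Tendsto _ (@nhds K (derTop τ {D}) x) (@nhds K (derTop τ {D}) x⁻¹)
  rw [tendsto_nhds_derTop_singleton_iff, nhds_derTop_singleton]
  have hinv : Tendsto Inv.inv (𝓝 x ⊓ comap D (𝓝 (D x))) (𝓝 x⁻¹) :=
    (tendsto_inv₀ hx).mono_left inf_le_left
  have hD : Tendsto D (𝓝 x ⊓ comap D (𝓝 (D x))) (𝓝 (D x)) := tendsto_comap.mono_left inf_le_right
  refine ⟨hinv, ?_⟩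
  have hDinv (y : K) : D y⁻¹ = -(y⁻¹ ^ 2 * D y) := by simp [D.leibniz_inv]
  simpa only [Function.comp_def, hDinv] using ((hinv.pow 2).mul hD).neg

theorem IsFieldTopology.derTop_singleton (h : IsFieldTopology τ) :
    IsFieldTopology (derTop τ {D}) := by
  obtain ⟨_, _, _⟩ := isFieldTopology_iff.1 h
  exact (@isFieldTopology_iff K _ (derTop τ {D})).2
    ⟨t2Space_antitone (derTop_singleton_le D) ‹_›, isTopologicalRing_derTop_singleton D,
      continuousInv₀_derTop_singleton D⟩

theorem derTop_singleton_ne_bot [IsTopologicalAddGroup K] [T1Space K] (hτ : τ ≠ ⊥)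
    (hdense : Dense {a | D a = 0}) : derTop τ {D} ≠ ⊥ := by
  have : NeBot (𝓝[≠] (0 : K)) := by
    rw [neBot_iff, Ne, ← isOpen_singleton_iff_punctured_nhds,
      ← discreteTopology_iff_isOpen_singleton_zero]
    exact fun h => hτ h.eq_bot
  have hconst : NeBot (𝓝[{a | D a = 0} \ {0}] (0 : K)) :=
    mem_closure_iff_nhdsWithin_neBot.1 (hdense.sdiff_singleton 0 0)
  have hle : 𝓝[{a | D a = 0} \ {0}] (0 : K) ≤ @nhds K (derTop τ {D}) 0 ⊓ 𝓟 {0}ᶜ :=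
    le_inf (nhdsWithin_le_nhds_derTop_singleton D fun y hy => by simpa using hy.1)
      (inf_le_right.trans (principal_mono.2 (Set.sdiff_subset_compl _ _)))
  intro h
  rw [h, @nhds_discrete K ⊥ (discreteTopology_bot K), inf_principal_eq_bot.2 (by simp)] at hle
  exact hconst.ne (le_bot_iff.1 hle)

theorem derTop_singleton_lt [T2Space K] (hD : D ≠ 0) (hdense : Dense {a | D a = 0}) :
    derTop τ {D} < τ := by
  refine (derTop_singleton_le D).lt_of_ne fun h => hD ?_
  rw [derTop_singleton, inf_eq_left, ← continuous_iff_le_induced] at h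
  exact Derivation.ext fun a => congrFun (h.ext_on hdense continuous_const fun _ hx => hx) a

end DerTop

noncomputable def gtHenselPoly {R : Type*} [CommRing R] (n : ℕ) (a : Fin (n + 1) → R) : R[X] :=
  X ^ (n + 2) + X ^ (n + 1) + ∑ i : Fin (n + 1), C (a i) * X ^ (i : ℕ)

def HasSimpleRootsNearNegOne [Field K] (τ : TopologicalSpace K) : Prop :=
  ∀ U ∈ @nhds K τ (-1), ∀ n : ℕ, ∃ V ∈ @nhds K τ 0, ∀ a : Fin (n + 1) → K, (∀ i, a i ∈ V) →
    ∃ β ∈ U, (gtHenselPoly n a).IsRoot β ∧ (derivative (gtHenselPoly n a)).eval β ≠ 0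

theorem isGtHenselian_iff [Field K] (τ : TopologicalSpace K) :
    IsGtHenselian τ ↔ IsFieldTopology τ ∧ τ ≠ ⊥ ∧ HasSimpleRootsNearNegOne τ :=
  Iff.rfl

section GtHenselPoly

variable {R : Type*} [CommRing R] (n : ℕ)

theorem eval_derivative_gtHenselPoly (a : Fin (n + 1) → R) (β : R) :
    (derivative (gtHenselPoly n a)).eval β =
      (n + 2) * β ^ (n + 1) + (n + 1) * β ^ n +
        ∑ i : Fin (n + 1), a i * (i * β ^ ((i : ℕ) - 1)) := by
  simp only [gtHenselPoly, derivative_add, derivative_X_pow, derivative_sum, derivative_C_mul,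
    eval_add, eval_mul, eval_pow, eval_X, eval_C, eval_finsetSum]
  push_cast
  ring

theorem eval_derivative_gtHenselPoly_zero_neg_one :
    (derivative (gtHenselPoly n (0 : Fin (n + 1) → R))).eval (-1) = -(-1) ^ n := by
  rw [eval_derivative_gtHenselPoly]
  simp only [Pi.zero_apply, zero_mul, Finset.sum_const_zero, add_zero, pow_succ]
  ring

theorem Derivation.mul_eval_derivative_gtHenselPoly (D : Derivation ℤ R R) {a : Fin (n + 1) → R}
    {β : R} (hβ : (gtHenselPoly n a).IsRoot β) :
    D β * (derivative (gtHenselPoly n a)).eval β = -∑ i : Fin (n + 1), β ^ (i : ℕ) * D (a i) := by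
  have h := D.apply_eval_eq β (gtHenselPoly n a)
  have hcoeffs : PolynomialModule.eval β (D.mapCoeffs (gtHenselPoly n a)) =
      ∑ i : Fin (n + 1), β ^ (i : ℕ) * D (a i) := by
    simp only [gtHenselPoly, map_add, map_sum, X_pow_eq_monomial, Derivation.mapCoeffs_monomial,
      Derivation.map_one_eq_zero]
    simp [PolynomialModule.eval_single, smul_eq_mul]
  rw [hβ.eq_zero, map_zero, hcoeffs, smul_eq_mul] at h
  linear_combination -h

end GtHenselPoly

noncomputable def gtHenselRootDeriv [Field K] (n : ℕ) (a b : Fin (n + 1) → K) (β : K) : K :=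
  -(∑ i : Fin (n + 1), β ^ (i : ℕ) * b i) / (derivative (gtHenselPoly n a)).eval β

theorem Derivation.apply_eq_gtHenselRootDeriv [Field K] (D : Derivation ℤ K K) {n : ℕ}
    {a : Fin (n + 1) → K} {β : K} (hβ : (gtHenselPoly n a).IsRoot β)
    (hβ' : (derivative (gtHenselPoly n a)).eval β ≠ 0) :
    D β = gtHenselRootDeriv n a (fun i => D (a i)) β :=
  (eq_div_iff hβ').2 (D.mul_eval_derivative_gtHenselPoly n hβ)

theorem exists_mem_nhds_pi_subset {X ι : Type*} [TopologicalSpace X] [Finite ι] {x : X}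
    {s : Set (ι → X)} (hs : s ∈ 𝓝 fun _ => x) : ∃ V ∈ 𝓝 x, Set.univ.pi (fun _ => V) ⊆ s := by
  rw [nhds_pi, Filter.mem_pi] at hs
  obtain ⟨I, -, t, ht, hsub⟩ := hs
  exact ⟨⋂ i, t i, iInter_mem.2 ht, fun a ha => hsub fun i _ => Set.mem_iInter.1 (ha i trivial) i⟩

section Topology

variable [Field K] [τ : TopologicalSpace K]

theorem continuousAt_gtHenselRootDeriv [IsTopologicalRing K] [ContinuousInv₀ K] (n : ℕ) :
    ContinuousAt (fun p : (Fin (n + 1) → K) × (Fin (n + 1) → K) × K =>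
      gtHenselRootDeriv n p.1 p.2.1 p.2.2) (0, 0, -1) := by
  have h0 : (derivative (gtHenselPoly n (0 : Fin (n + 1) → K))).eval (-1) ≠ 0 := by
    simp [eval_derivative_gtHenselPoly_zero_neg_one]
  refine ContinuousAt.div (by fun_prop) ?_ h0
  simp only [eval_derivative_gtHenselPoly]
  fun_prop

theorem exists_nhds_gtHenselRootDeriv_mem [IsTopologicalRing K] [ContinuousInv₀ K] (n : ℕ)
    {U : Set K} (hU : U ∈ 𝓝 0) :
    ∃ V ∈ 𝓝 (0 : K), ∃ W ∈ 𝓝 (-1 : K), ∀ a b : Fin (n + 1) → K, (∀ i, a i ∈ V) →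
      (∀ i, b i ∈ V) → ∀ β ∈ W, gtHenselRootDeriv n a b β ∈ U := by
  have hval : gtHenselRootDeriv n 0 0 (-1 : K) = 0 := by simp [gtHenselRootDeriv]
  have hpre := continuousAt_gtHenselRootDeriv n (hval ▸ hU)
  rw [mem_map, nhds_prod_eq, nhds_prod_eq, mem_prod_iff] at hpre
  obtain ⟨A, hA, BW, hBW, hsub⟩ := hpre
  obtain ⟨B, hB, W, hW, hsub'⟩ := mem_prod_iff.1 hBW
  obtain ⟨V₁, hV₁, hA'⟩ := exists_mem_nhds_pi_subset hA
  obtain ⟨V₂, hV₂, hB'⟩ := exists_mem_nhds_pi_subset hB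
  refine ⟨V₁ ∩ V₂, inter_mem hV₁ hV₂, W, hW, fun a b ha hb β hβ => ?_⟩
  exact hsub (Set.mk_mem_prod (hA' fun i _ => (ha i).1)
    (hsub' (Set.mk_mem_prod (hB' fun i _ => (hb i).2) hβ)))

theorem HasSimpleRootsNearNegOne.derTop_singleton [IsTopologicalRing K] [ContinuousInv₀ K]
    (h : HasSimpleRootsNearNegOne τ) (D : Derivation ℤ K K) :
    HasSimpleRootsNearNegOne (derTop τ {D}) := by
  intro U hU n
  rw [nhds_derTop_singleton, map_neg, D.map_one_eq_zero, neg_zero] at hU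
  obtain ⟨U₁, hU₁, t, ⟨U₂, hU₂, hpre⟩, rfl⟩ := mem_inf_iff.1 hU
  obtain ⟨V₁, hV₁, W, hW, hsmall⟩ := exists_nhds_gtHenselRootDeriv_mem n hU₂
  obtain ⟨V, hV, hroot⟩ := h (U₁ ∩ W) (inter_mem hU₁ hW) n
  refine ⟨(V ∩ V₁) ∩ D ⁻¹' V₁, ?_, fun a ha => ?_⟩
  · rw [nhds_derTop_singleton, D.map_zero]
    exact inter_mem (mem_inf_of_left (inter_mem hV hV₁))
      (mem_inf_of_right (preimage_mem_comap hV₁))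
  obtain ⟨β, ⟨hβU₁, hβW⟩, hβ, hβ'⟩ := hroot a fun i => (ha i).1.1
  refine ⟨β, ⟨hβU₁, hpre ?_⟩, hβ, hβ'⟩
  rw [Set.mem_preimage, D.apply_eq_gtHenselRootDeriv hβ hβ']
  exact hsmall a _ (fun i => (ha i).1.2) (fun i => (ha i).2) β hβW

end Topology

theorem stmt17_general [Field K] (τ : TopologicalSpace K)
    (hτ : IsGtHenselian τ) (d : Derivation ℤ K K) (hd : d ≠ 0)
    (hdense : @Dense K τ {a : K | d a = 0}) :
    IsGtHenselian (derTop τ {d}) ∧ derTop τ {d} < τ := by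
  obtain ⟨hfield, hbot, hroots⟩ := (isGtHenselian_iff τ).1 hτ
  obtain ⟨_, _, _⟩ := isFieldTopology_iff.1 hfield
  refine ⟨(isGtHenselian_iff _).2 ⟨?_, ?_, ?_⟩, derTop_singleton_lt d hd hdense⟩
  · exact hfield.derTop_singleton d
  · exact derTop_singleton_ne_bot d hbot hdense
  · exact hroots.derTop_singleton d

theorem stmt17 [Field K] [CharZero K] (τ : TopologicalSpace K)
    (hτ : IsGtHenselian τ) (d : Derivation ℤ K K) (hd : d ≠ 0)
    (hdense : @Dense K τ {a : K | d a = 0}) :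
    IsGtHenselian (derTop τ {d}) ∧ derTop τ {d} < τ :=
  stmt17_general τ hτ d hd hdense
end
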